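/- arXiv:1911.01108 — 9 statements merged into one kernel-verified Lean document; each statement's English description precedes it below -/
import Mathlib

section
/- Consider the replicator-type ODE on the simplex: for i = 1,...,S, dX^i/dt = X^i (s^i - Σ_{k=1}^{S} s^k X^k) / (1 + Σ_{k=1}^{S} s^k X^k), with constants s^1,...,s^S > -1 and s^{S+1} = 0, X^{S+1} = 1 - Σ_{i=1}^S X^i. If all s^k are pairwise distinct, m = argmax_i s^i, and X_0^m > 0, then X_t converges to the vertex e_m as t → ∞ (i.e., X_t^m → 1 and X_t^j → 0 for j ≠ m). -/
open Filter

/-- for the replicator-type ODE on the simplex with pairwise distinct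
fitnesses, if the species `m` with maximal fitness is initially present, the solution
converges to the vertex `e_m`. -/
theorem moran_ode_converges_to_best
    (S : ℕ) (s : Fin (S + 1) → ℝ) (X : ℝ → Fin (S + 1) → ℝ)
    (hs_gt : ∀ i, -1 < s i)
    (hs_last : s (Fin.last S) = 0)
    (hs_inj : Function.Injective s)
    (hsimplex : ∀ t, (∀ i, 0 ≤ X t i) ∧ (∑ i, X t i) = 1)
    (hode : ∀ t, ∀ i, HasDerivAt (fun u => X u i)
      (X t i * ((s i - ∑ k, s k * X t k) / (1 + ∑ k, s k * X t k))) t)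
    (m : Fin (S + 1)) (hm : ∀ j, j ≠ m → s j < s m)
    (h0 : 0 < X 0 m) :
    Tendsto (fun t => X t m) atTop (nhds 1) ∧
      ∀ j, j ≠ m → Tendsto (fun t => X t j) atTop (nhds 0) := by
  classical
  set F : ℝ → ℝ := fun t => ∑ k, s k * X t k with hFdef
  have hXcont : ∀ i, Continuous fun t => X t i := fun i =>
    continuous_iff_continuousAt.2 fun t => (hode t i).continuousAt
  have hFcont : Continuous F := by
    apply continuous_finset_sum
    exact fun k _ => continuous_const.mul (hXcont k)
  -- s m is the maximum, and it is nonnegative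
  have hsk : ∀ k, s k ≤ s m := by
    intro k
    by_cases hk : k = m
    · simp [hk]
    · exact (hm k hk).le
  have hsm0 : 0 ≤ s m := by
    rw [← hs_last]; exact hsk _
  -- positivity of denominator
  have hFpos : ∀ t, 0 < 1 + F t := by
    intro t
    obtain ⟨hXnn, hXsum⟩ := hsimplex t
    have hlt : ∑ k, (-1 : ℝ) * X t k < ∑ k, s k * X t k := by
      apply Finset.sum_lt_sum
      · intro k _
        exact mul_le_mul_of_nonneg_right (hs_gt k).le (hXnn k)
      · -- some coordinate is positive
        have : ∃ k, 0 < X t k := by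
          by_contra h
          push_neg at h
          have : ∑ k, X t k = 0 := Finset.sum_eq_zero fun k _ => le_antisymm (h k) (hXnn k)
          rw [hXsum] at this; norm_num at this
        obtain ⟨k, hk⟩ := this
        exact ⟨k, Finset.mem_univ k, by nlinarith [hs_gt k]⟩
    have : (-1 : ℝ) < F t := by
      have h2 : ∑ k, (-1 : ℝ) * X t k = -1 := by
        simp only [neg_one_mul]
        rw [Finset.sum_neg_distrib, hXsum]
      linarith [hlt, h2]
    linarith
  have hFle : ∀ t, F t ≤ s m := by
    intro t
    obtain ⟨hXnn, hXsum⟩ := hsimplex t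
    calc F t ≤ ∑ k, s m * X t k :=
          Finset.sum_le_sum fun k _ => mul_le_mul_of_nonneg_right (hsk k) (hXnn k)
      _ = s m := by rw [← Finset.mul_sum, hXsum, mul_one]
  -- the per-species growth rate
  set φ : Fin (S + 1) → ℝ → ℝ := fun j t => (s j - F t) / (1 + F t) with hφdef
  have hφcont : ∀ j, Continuous (φ j) := by
    intro j
    exact (continuous_const.sub hFcont).div (continuous_const.add hFcont)
      fun t => (hFpos t).ne'
  set Φ : Fin (S + 1) → ℝ → ℝ := fun j t => ∫ u in (0:ℝ)..t, φ j u with hΦdef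
  have hΦderiv : ∀ j t, HasDerivAt (Φ j) (φ j t) t := by
    intro j t
    exact intervalIntegral.integral_hasDerivAt_right
      ((hφcont j).intervalIntegrable 0 t)
      ((hφcont j).stronglyMeasurableAtFilter _ _)
      (hφcont j).continuousAt
  -- the exponential representation of solutions
  have hrep : ∀ j t, X t j = X 0 j * Real.exp (Φ j t) := by
    intro j t
    set g : ℝ → ℝ := fun u => X u j * Real.exp (-(Φ j u)) with hgdef
    have hgderiv : ∀ u, HasDerivAt g 0 u := by
      intro u
      have h1 : HasDerivAt (fun u => X u j * Real.exp (-(Φ j u))) _ u := (hode u j).mul (((hΦderiv j u).neg).exp)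
      convert h1 using 1
      simp only [hφdef, hFdef, Pi.neg_apply]
      ring
    have hgconst : g t = g 0 := by
      apply is_const_of_deriv_eq_zero (fun u => (hgderiv u).differentiableAt)
      intro u; exact (hgderiv u).deriv
    have hΦ0 : Φ j 0 = 0 := intervalIntegral.integral_same
    have := hgconst
    simp only [hgdef, hΦ0, neg_zero, Real.exp_zero, mul_one] at this
    have hexp : Real.exp (-(Φ j t)) ≠ 0 := Real.exp_ne_zero _
    field_simp [Real.exp_neg] at this ⊢
    rw [← this, mul_assoc, ← Real.exp_add, neg_add_cancel, Real.exp_zero, mul_one]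
  -- the clock integral
  set I : ℝ → ℝ := fun t => ∫ u in (0:ℝ)..t, (1 + F u)⁻¹ with hIdef
  have hinvcont : Continuous fun u => (1 + F u)⁻¹ :=
    (continuous_const.add hFcont).inv₀ fun t => (hFpos t).ne'
  have hΦdiff : ∀ j t, Φ j t - Φ m t = (s j - s m) * I t := by
    intro j t
    have h1 : Φ j t - Φ m t = ∫ u in (0:ℝ)..t, (φ j u - φ m u) := by
      rw [intervalIntegral.integral_sub ((hφcont j).intervalIntegrable 0 t)
        ((hφcont m).intervalIntegrable 0 t)]
    rw [h1]
    have h2 : ∀ u, φ j u - φ m u = (s j - s m) * (1 + F u)⁻¹ := by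
      intro u
      simp only [hφdef]
      field_simp
      ring
    simp only [h2]
    rw [intervalIntegral.integral_const_mul]
  -- lower bound on the clock
  have hIlb : ∀ t : ℝ, 0 ≤ t → (1 + s m)⁻¹ * t ≤ I t := by
    intro t ht
    have hmono : ∫ u in (0:ℝ)..t, (1 + s m)⁻¹ ≤ I t := by
      apply intervalIntegral.integral_mono_on ht
        (intervalIntegrable_const) (hinvcont.intervalIntegrable 0 t)
      intro u _
      apply inv_anti₀ (hFpos u)
      linarith [hFle u]
    calc (1 + s m)⁻¹ * t = ∫ u in (0:ℝ)..t, (1 + s m)⁻¹ := by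
          rw [intervalIntegral.integral_const]; simp [mul_comm]
      _ ≤ I t := hmono
  have hItop : Tendsto I atTop atTop := by
    refine tendsto_atTop_mono' atTop ?_
      (tendsto_id.const_mul_atTop (show (0:ℝ) < (1 + s m)⁻¹ by positivity))
    filter_upwards [eventually_ge_atTop (0:ℝ)] with t ht using hIlb t ht
  -- the ratios and their decay
  have hratio_tendsto : ∀ j, j ≠ m →
      Tendsto (fun t => Real.exp ((s j - s m) * I t)) atTop (nhds 0) := by
    intro j hj
    apply Real.tendsto_exp_atBot.comp
    exact (tendsto_const_mul_atBot_of_neg (by linarith [hm j hj])).2 hItop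
  have hXm_pos : ∀ t, 0 < X t m := by
    intro t
    rw [hrep m t]
    exact mul_pos h0 (Real.exp_pos _)
  -- key identity: X t j = (X 0 j / X 0 m) * exp((s j - s m) * I t) * X t m
  have hkey : ∀ j t, X t j = (X 0 j / X 0 m) * Real.exp ((s j - s m) * I t) * X t m := by
    intro j t
    rw [hrep j t, hrep m t, ← hΦdiff j t]
    rw [show Φ j t = (Φ j t - Φ m t) + Φ m t by ring, Real.exp_add]
    field_simp
    ring
  -- the sum of ratios over j ≠ m
  set R : ℝ → ℝ := fun t => ∑ j ∈ Finset.univ.erase m,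
    (X 0 j / X 0 m) * Real.exp ((s j - s m) * I t) with hRdef
  have hR_tendsto : Tendsto R atTop (nhds 0) := by
    have : Tendsto R atTop (nhds (∑ j ∈ Finset.univ.erase m, (0:ℝ))) := by
      apply tendsto_finset_sum
      intro j hj
      have hj' : j ≠ m := Finset.ne_of_mem_erase hj
      simpa using (hratio_tendsto j hj').const_mul (X 0 j / X 0 m)
    simpa using this
  have hR_nonneg : ∀ t, 0 ≤ R t := by
    intro t
    apply Finset.sum_nonneg
    intro j _
    have := (hsimplex 0).1 j
    positivity
  -- the identity 1 = X t m * (1 + R t)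
  have hident : ∀ t, X t m = (1 + R t)⁻¹ := by
    intro t
    obtain ⟨hXnn, hXsum⟩ := hsimplex t
    have hsplit : (1:ℝ) = X t m + ∑ j ∈ Finset.univ.erase m, X t j := by
      rw [← hXsum, ← Finset.add_sum_erase _ _ (Finset.mem_univ m)]
    have hsum_eq : ∑ j ∈ Finset.univ.erase m, X t j = R t * X t m := by
      rw [hRdef, Finset.sum_mul]
      apply Finset.sum_congr rfl
      intro j _
      exact hkey j t
    rw [hsum_eq] at hsplit
    exact eq_inv_of_mul_eq_one_left (by linear_combination -hsplit)
  have hXm_lim : Tendsto (fun t => X t m) atTop (nhds 1) := by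
    have h1 : Tendsto (fun t => (1 + R t)⁻¹) atTop (nhds 1) := by
      have := ((tendsto_const_nhds (x := (1:ℝ))).add hR_tendsto).inv₀ (by norm_num)
      simpa using this
    exact h1.congr fun t => (hident t).symm
  refine ⟨hXm_lim, ?_⟩
  intro j hj
  have : Tendsto (fun t => (X 0 j / X 0 m) * Real.exp ((s j - s m) * I t) * X t m)
      atTop (nhds ((X 0 j / X 0 m) * 0 * 1)) :=
    (((hratio_tendsto j hj).const_mul _).mul hXm_lim)
  simpa using this.congr fun t => (hkey j t).symm
end

section
/- For the ODE dX^i/dt = X^i (s^i - Σ_k s^k X^k)/(1 + Σ_k s^k X^k) on the simplex, if m is the unique index with maximal fitness s^m and X_0^m > 0, then the coordinate X_t^m is non-decreasing in t. -/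
/-- the coordinate of the species with the unique maximal fitness is
non-decreasing along the flow. -/
theorem moran_ode_best_coordinate_monotone
    (S : ℕ) (s : Fin (S + 1) → ℝ) (X : ℝ → Fin (S + 1) → ℝ)
    (hs_gt : ∀ i, -1 < s i)
    (hs_last : s (Fin.last S) = 0)
    (hsimplex : ∀ t, t ∈ Set.Ici (0:ℝ) → (∀ i, 0 ≤ X t i) ∧ (∑ i, X t i) = 1)
    (hode : ∀ t ∈ Set.Ici (0:ℝ), ∀ i, HasDerivAt (fun u => X u i)
      (X t i * ((s i - ∑ k, s k * X t k) / (1 + ∑ k, s k * X t k))) t)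
    (m : Fin (S + 1)) (hm : ∀ j, j ≠ m → s j < s m)
    (h0 : 0 < X 0 m) :
    MonotoneOn (fun t => X t m) (Set.Ici (0:ℝ)) := by
  have key : ∀ t ∈ Set.Ici (0:ℝ),
      0 ≤ X t m * ((s m - ∑ k, s k * X t k) / (1 + ∑ k, s k * X t k)) := by
    intro t ht
    obtain ⟨hpos, hsum⟩ := hsimplex t ht
    have hnum : 0 ≤ s m - ∑ k, s k * X t k := by
      have heq : s m - ∑ k, s k * X t k = ∑ k, (s m - s k) * X t k := by
        simp [sub_mul, Finset.sum_sub_distrib, ← Finset.mul_sum, hsum]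
      rw [heq]
      refine Finset.sum_nonneg fun k _ => mul_nonneg ?_ (hpos k)
      rcases eq_or_ne k m with rfl | h
      · simp
      · exact sub_nonneg.2 (le_of_lt (hm k h))
    have hden : 0 ≤ 1 + ∑ k, s k * X t k := by
      have heq : 1 + ∑ k, s k * X t k = ∑ k, (1 + s k) * X t k := by
        simp [add_mul, Finset.sum_add_distrib, hsum]
      rw [heq]
      refine Finset.sum_nonneg fun k _ => mul_nonneg ?_ (hpos k)
      linarith [hs_gt k]
    exact mul_nonneg (hpos m) (div_nonneg hnum hden)
  apply monotoneOn_of_deriv_nonneg (convex_Ici 0)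
  · intro t ht
    exact ((hode t ht m).continuousAt).continuousWithinAt
  · intro t ht
    rw [interior_Ici] at ht
    exact ((hode t (Set.mem_Ici.2 (le_of_lt ht)) m).differentiableAt).differentiableWithinAt
  · intro t ht
    rw [interior_Ici] at ht
    rw [(hode t (Set.mem_Ici.2 (le_of_lt ht)) m).deriv]
    exact key t (Set.mem_Ici.2 (le_of_lt ht))
end

section
/- Suppose a probability measure on (0,1) × {1,2} has positive density pair (h_1, h_2) with h_i(x) = H(x)(1+s_i x)/(|s_i| x(1-x)), where H(x) = C (1-x)^{βΛ_1} x^{αΛ_0}, α = (q_1+q_2)/|s_1 s_2|, β = α(1+s_1)(1+s_2), Λ_0 = p_1 s_1 + p_2 s_2, Λ_1 = -(p_1 s_1/(1+s_1) + p_2 s_2/(1+s_2)), p_1 = q_2/(q_1+q_2), p_2 = q_1/(q_1+q_2). Then (h_1, h_2) satisfies the stationary Fokker–Planck system q_1 h_1 - q_2 h_2 = -(g_1 h_1)' and q_1 h_1 - q_2 h_2 = (g_2 h_2)' on (0,1), where g_i(x) = s_i x(1-x)/(1+s_i x). -/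
set_option maxHeartbeats 1000000 in
/-- the explicit density pair `(h₁, h₂)` satisfies the stationary
Fokker–Planck system of the two-state switched Moran PDMP on `(0,1)`. -/
theorem density_satisfies_fokker_planck
    (s₁ s₂ q₁ q₂ C : ℝ)
    (hs₁ : 0 < s₁) (hs₂neg : s₂ < 0) (hs₂ : -1 < s₂)
    (hq₁ : 0 < q₁) (hq₂ : 0 < q₂) (hC : 0 < C) :
    let p₁ : ℝ := q₂ / (q₁ + q₂)
    let p₂ : ℝ := q₁ / (q₁ + q₂)
    let Λ₀ : ℝ := p₁ * s₁ + p₂ * s₂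
    let Λ₁ : ℝ := -(p₁ * (s₁ / (1 + s₁)) + p₂ * (s₂ / (1 + s₂)))
    let α : ℝ := (q₁ + q₂) / |s₁ * s₂|
    let β : ℝ := α * (1 + s₁) * (1 + s₂)
    let H : ℝ → ℝ := fun x => C * (1 - x) ^ (β * Λ₁) * x ^ (α * Λ₀)
    let h₁ : ℝ → ℝ := fun x => H x * (1 + s₁ * x) / (|s₁| * (x * (1 - x)))
    let h₂ : ℝ → ℝ := fun x => H x * (1 + s₂ * x) / (|s₂| * (x * (1 - x)))
    let g₁ : ℝ → ℝ := fun x => s₁ * (x * (1 - x)) / (1 + s₁ * x)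
    let g₂ : ℝ → ℝ := fun x => s₂ * (x * (1 - x)) / (1 + s₂ * x)
    ∀ x ∈ Set.Ioo (0:ℝ) 1,
      HasDerivAt (fun y => g₁ y * h₁ y) (-(q₁ * h₁ x - q₂ * h₂ x)) x ∧
      HasDerivAt (fun y => g₂ y * h₂ y) (q₁ * h₁ x - q₂ * h₂ x) x := by
  intro p₁ p₂ Λ₀ Λ₁ α β H h₁ h₂ g₁ g₂ x hx
  obtain ⟨hx0, hx1⟩ := hx
  have h1x : (0:ℝ) < 1 - x := by linarith
  have hs₁' : |s₁| = s₁ := abs_of_pos hs₁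
  have hs₂' : |s₂| = -s₂ := abs_of_neg hs₂neg
  have habs : |s₁ * s₂| = -(s₁ * s₂) := abs_of_neg (mul_neg_of_pos_of_neg hs₁ hs₂neg)
  have hq : q₁ + q₂ ≠ 0 := by positivity
  have h1s₁ : (1:ℝ) + s₁ ≠ 0 := by linarith
  have h1s₂ : (1:ℝ) + s₂ ≠ 0 := by linarith
  have hss : -(s₁ * s₂) ≠ 0 := by
    have : s₁ * s₂ < 0 := mul_neg_of_pos_of_neg hs₁ hs₂neg
    linarith
  have hs1ne : s₁ ≠ 0 := ne_of_gt hs₁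
  have hs2ne : s₂ ≠ 0 := ne_of_lt hs₂neg
  set a : ℝ := β * Λ₁ with ha
  set b : ℝ := α * Λ₀ with hb
  -- derivative of H at x
  have hd1 : HasDerivAt (fun y : ℝ => (1 - y) ^ a) (a * (1 - x) ^ (a - 1) * (-1)) x := by
    have h := (Real.hasDerivAt_rpow_const (x := 1 - x) (p := a)
      (Or.inl h1x.ne')).comp x ((hasDerivAt_id x).const_sub 1)
    simpa [Function.comp_def] using h
  have hd2 : HasDerivAt (fun y : ℝ => y ^ b) (b * x ^ (b - 1)) x :=
    Real.hasDerivAt_rpow_const (Or.inl hx0.ne')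
  have hdH : HasDerivAt H
      (C * ((a * (1 - x) ^ (a - 1) * (-1)) * x ^ b + (1 - x) ^ a * (b * x ^ (b - 1)))) x := by
    have h := (hd1.mul hd2).const_mul C
    unfold H
    simpa [mul_assoc] using h
  -- closed forms for the exponents
  have hbeq : b = -(q₂ / s₂) - q₁ / s₁ := by
    rw [hb]; unfold α Λ₀ p₁ p₂; rw [habs, div_neg]; field_simp; ring
  have haeq : a = q₁ + q₂ + q₁ / s₁ + q₂ / s₂ := by
    rw [ha]; unfold β α Λ₁ p₁ p₂; rw [habs, div_neg]; field_simp; ring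
  -- value of the derivative
  have key : C * ((a * (1 - x) ^ (a - 1) * (-1)) * x ^ b + (1 - x) ^ a * (b * x ^ (b - 1)))
      = -(q₁ * h₁ x - q₂ * h₂ x) := by
    rw [Real.rpow_sub h1x, Real.rpow_sub hx0, Real.rpow_one, Real.rpow_one]
    unfold h₁ h₂ H
    beta_reduce
    rw [hs₁', hs₂']
    rw [show β * Λ₁ = a from ha.symm, show α * Λ₀ = b from hb.symm]
    have hxne : x ≠ 0 := ne_of_gt hx0
    have h1xne : (1:ℝ) - x ≠ 0 := ne_of_gt h1x
    generalize (1 - x : ℝ) ^ a = A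
    generalize (x : ℝ) ^ b = B
    rw [haeq, hbeq]
    field_simp
    ring
  -- eventual equalities on the open interval
  have hmem : Set.Ioo (0:ℝ) 1 ∈ nhds x := isOpen_Ioo.mem_nhds ⟨hx0, hx1⟩
  have heq1 : (fun y => g₁ y * h₁ y) =ᶠ[nhds x] H := by
    refine Filter.eventuallyEq_of_mem hmem fun y hy => ?_
    obtain ⟨hy0, hy1⟩ := hy
    have hy1' : (0:ℝ) < 1 - y := by linarith
    have hys : (0:ℝ) < 1 + s₁ * y := by nlinarith
    unfold g₁ h₁ H
    rw [hs₁']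
    field_simp
  have heq2 : (fun y => g₂ y * h₂ y) =ᶠ[nhds x] (fun y => -H y) := by
    refine Filter.eventuallyEq_of_mem hmem fun y hy => ?_
    obtain ⟨hy0, hy1⟩ := hy
    have hy1' : (0:ℝ) < 1 - y := by linarith
    have hys : (0:ℝ) < 1 + s₂ * y := by nlinarith
    unfold g₂ h₂ H
    rw [hs₂']
    field_simp
  constructor
  · exact key ▸ hdH.congr_of_eventuallyEq heq1
  · have h := (hdH.neg).congr_of_eventuallyEq heq2
    rw [key] at h
    simpa using h
end

section
/- With equal switching rates (p_1 = p_2 = 1/2) and s_1 > 0 > s_2 > -1, the persistence conditions Λ_0 = (s_1+s_2)/2 > 0 and Λ_1 = -(1/2)(s_1/(1+s_1) + s_2/(1+s_2)) > 0 hold if and only if -s_1 < s_2 < -s_1/(1+2s_1). -/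
/-- with equal switching rates, the persistence conditions `Λ₀ > 0` and
`Λ₁ > 0` hold iff `-s₁ < s₂ < -s₁/(1+2s₁)`. -/
theorem persistence_conditions_equal_rates_iff
    (s₁ s₂ : ℝ) (hs₁ : 0 < s₁) (hs₂neg : s₂ < 0) (hs₂ : -1 < s₂) :
    (0 < (s₁ + s₂) / 2 ∧ 0 < -(1/2 : ℝ) * (s₁ / (1 + s₁) + s₂ / (1 + s₂)))
      ↔ (-s₁ < s₂ ∧ s₂ < -s₁ / (1 + 2 * s₁)) := by
  have h1 : (0:ℝ) < 1 + s₁ := by linarith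
  have h2 : (0:ℝ) < 1 + s₂ := by linarith
  have h3 : (0:ℝ) < 1 + 2 * s₁ := by linarith
  constructor
  · rintro ⟨a, b⟩
    constructor
    · linarith
    · rw [lt_div_iff₀ h3] at *
      have : s₁ / (1 + s₁) + s₂ / (1 + s₂) < 0 := by linarith
      rw [div_add_div _ _ (ne_of_gt h1) (ne_of_gt h2), div_neg_iff] at this
      rcases this with ⟨_, h⟩ | ⟨h, _⟩
      · nlinarith
      · nlinarith
  · rintro ⟨a, b⟩
    rw [lt_div_iff₀ h3] at b
    constructor
    · linarith
    · have : s₁ / (1 + s₁) + s₂ / (1 + s₂) < 0 := by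
        rw [div_add_div _ _ (ne_of_gt h1) (ne_of_gt h2)]
        apply div_neg_of_neg_of_pos
        · nlinarith
        · positivity
      linarith
end

section
/- Consider the three-species vector field G_s on the simplex {(x,y) : x,y ≥ 0, x+y ≤ 1} given by dx/dt = x(s - sx - ry)/(1+sx+ry), dy/dt = y(r - sx - ry)/(1+sx+ry) with s, r > -1. For any b ∈ (0,1), at any point of the line Δ_b = {x = b(1-y)} with x + y < 1, the inner product of the vector field with the outward normal vector v_b = (1, b) equals b·s·(1 - x - y)/(1+sx+ry); in particular it is strictly negative if and only if s < 0. -/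
/-- on the line `Δ_b = {x = b(1-y)}`, the inner product of the
three-species vector field with the outward normal `v_b = (1, b)` equals
`b·s·(1-x-y)/(1+sx+ry)`; in particular it is negative iff `s < 0`. -/
theorem vector_field_enters_trap_region
    (s r b x y : ℝ) (hs : -1 < s) (hr : -1 < r)
    (hb : b ∈ Set.Ioo (0:ℝ) 1)
    (hx : 0 ≤ x) (hy : 0 ≤ y) (hxy : x + y < 1)
    (hline : x = b * (1 - y)) :
    1 * (x * (s - s * x - r * y) / (1 + s * x + r * y)) +
        b * (y * (r - s * x - r * y) / (1 + s * x + r * y))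
      = b * s * (1 - x - y) / (1 + s * x + r * y) ∧
    (1 * (x * (s - s * x - r * y) / (1 + s * x + r * y)) +
        b * (y * (r - s * x - r * y) / (1 + s * x + r * y)) < 0 ↔ s < 0) := by
  obtain ⟨hb0, hb1⟩ := hb
  have hD : 0 < 1 + s * x + r * y := by nlinarith
  have hDne : (1 + s * x + r * y) ≠ 0 := ne_of_gt hD
  have key : 1 * (x * (s - s * x - r * y) / (1 + s * x + r * y)) +
        b * (y * (r - s * x - r * y) / (1 + s * x + r * y))
      = b * s * (1 - x - y) / (1 + s * x + r * y) := by
    subst hline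
    field_simp
    ring
  refine ⟨key, ?_⟩
  rw [key, div_neg_iff]
  have h1 : 0 < 1 - x - y := by linarith
  have hbp := mul_pos hb0 h1
  constructor
  · rintro (⟨_, hd⟩ | ⟨h, _⟩)
    · linarith
    · nlinarith
  · intro hslt
    right
    exact ⟨by nlinarith, hD⟩
end

section
/- Let s_1, r_1, s_2, r_2 ∈ (-1,∞) satisfy s_1 > 0 > r_1 and r_2 > 0 > s_2, let p_1, p_2 > 0 with p_1+p_2 = 1. If -p_1 r_1/(1+r_1) - p_2 r_2/(1+r_2) < 0 and p_1 (s_1-r_1)/(1+r_1) + p_2 (s_2-r_2)/(1+r_2) > 0, then r_1 s_2 < r_2 s_1. -/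
/-- `Λ₁¹ < 0` and `Λ₁³ > 0` imply `r₁ s₂ < r₂ s₁`. -/
theorem edge_indices_imply_cross_inequality
    (s₁ r₁ s₂ r₂ p₁ p₂ : ℝ)
    (hs₁ : 0 < s₁) (hr₁ : r₁ < 0) (hr₁' : -1 < r₁)
    (hr₂ : 0 < r₂) (hs₂ : s₂ < 0) (hs₂' : -1 < s₂)
    (hp₁ : 0 < p₁) (hp₂ : 0 < p₂) (hsum : p₁ + p₂ = 1)
    (hΛ₁1 : -p₁ * (r₁ / (1 + r₁)) - p₂ * (r₂ / (1 + r₂)) < 0)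
    (hΛ₁3 : 0 < p₁ * ((s₁ - r₁) / (1 + r₁)) + p₂ * ((s₂ - r₂) / (1 + r₂))) :
    r₁ * s₂ < r₂ * s₁ := by
  have hA : (0:ℝ) < 1 + r₁ := by linarith
  have hB : (0:ℝ) < 1 + r₂ := by linarith
  set a := p₁ / (1 + r₁) with ha'
  set b := p₂ / (1 + r₂) with hb'
  have ha : 0 < a := div_pos hp₁ hA
  have hb : 0 < b := div_pos hp₂ hB
  have h1 : 0 < a * r₁ + b * r₂ := by
    have : p₁ * (r₁ / (1 + r₁)) = a * r₁ := by rw [ha']; ring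
    have h2 : p₂ * (r₂ / (1 + r₂)) = b * r₂ := by rw [hb']; ring
    nlinarith [hΛ₁1]
  have h2 : 0 < a * s₁ + b * s₂ := by
    have e1 : p₁ * ((s₁ - r₁) / (1 + r₁)) = a * s₁ - a * r₁ := by rw [ha']; ring
    have e2 : p₂ * ((s₂ - r₂) / (1 + r₂)) = b * s₂ - b * r₂ := by rw [hb']; ring
    nlinarith [hΛ₁3]
  have k1 : a * (-r₁) < b * r₂ := by linarith
  have k2 : b * (-s₂) < a * s₁ := by linarith
  have := mul_lt_mul'' k1 k2 (mul_nonneg ha.le (by linarith)) (mul_nonneg hb.le (by linarith))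
  nlinarith [this, mul_pos ha hb]
end

section
/- Let s_1, r_1, s_2, r_2 ∈ (-1,∞) with s_1 > 0 > r_1, r_2 > 0 > s_2, and p_1, p_2 > 0 with p_1+p_2=1. If -p_1 s_1/(1+s_1) - p_2 s_2/(1+s_2) > 0 and p_1 (r_1-s_1)/(1+s_1) + p_2 (r_2-s_2)/(1+s_2) < 0, then r_1 s_2 > r_2 s_1. -/
/-- `Λ₁² > 0` and `Λ₀³ < 0` imply `r₁ s₂ > r₂ s₁`. -/
theorem edge_indices_imply_reverse_cross_inequality
    (s₁ r₁ s₂ r₂ p₁ p₂ : ℝ)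
    (hs₁ : 0 < s₁) (hr₁ : r₁ < 0) (hr₁' : -1 < r₁)
    (hr₂ : 0 < r₂) (hs₂ : s₂ < 0) (hs₂' : -1 < s₂)
    (hp₁ : 0 < p₁) (hp₂ : 0 < p₂) (hsum : p₁ + p₂ = 1)
    (hΛ₁2 : 0 < -p₁ * (s₁ / (1 + s₁)) - p₂ * (s₂ / (1 + s₂)))
    (hΛ₀3 : p₁ * ((r₁ - s₁) / (1 + s₁)) + p₂ * ((r₂ - s₂) / (1 + s₂)) < 0) :
    r₁ * s₂ > r₂ * s₁ := by
  have h1 : (0:ℝ) < 1 + s₁ := by linarith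
  have h2 : (0:ℝ) < 1 + s₂ := by linarith
  set a := p₁ / (1 + s₁) with ha
  set b := p₂ / (1 + s₂) with hb
  have hap : 0 < a := div_pos hp₁ h1
  have hbp : 0 < b := div_pos hp₂ h2
  have e1 : a * s₁ < b * (-s₂) := by
    have : p₁ * (s₁ / (1 + s₁)) = a * s₁ := by rw [ha]; ring
    have h2' : p₂ * (s₂ / (1 + s₂)) = b * s₂ := by rw [hb]; ring
    nlinarith [hΛ₁2]
  have e2 : b * r₂ < a * (-r₁) := by
    have h1' : p₁ * ((r₁ - s₁) / (1 + s₁)) = a * (r₁ - s₁) := by rw [ha]; ring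
    have h2' : p₂ * ((r₂ - s₂) / (1 + s₂)) = b * (r₂ - s₂) := by rw [hb]; ring
    nlinarith [hΛ₀3, e1]
  have key : (a * s₁) * (b * r₂) < (b * (-s₂)) * (a * (-r₁)) := by
    apply mul_lt_mul' (le_of_lt e1) e2 (by positivity) (mul_pos hbp (by linarith))
  nlinarith [key, mul_pos hap hbp]
end

section
/- Let s_1 > 0 > r_1, r_2 > 0 > s_2 (all > -1) and p_1, p_2 > 0 with p_1+p_2 = 1. If -p_1 s_1/(1+s_1) - p_2 s_2/(1+s_2) > 0 and p_1 r_1 + p_2 r_2 > 0, then p_1 (r_1-s_1)/(1+s_1) + p_2 (r_2-s_2)/(1+s_2) > 0, i.e., Λ_0^3 > 0. -/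
/-- if `Λ₁² > 0` and `Λ₀¹ > 0`, then `Λ₀³ > 0`. -/
theorem lambda03_positive
    (s₁ r₁ s₂ r₂ p₁ p₂ : ℝ)
    (hs₁ : 0 < s₁) (hr₁ : r₁ < 0) (hr₁' : -1 < r₁)
    (hr₂ : 0 < r₂) (hs₂ : s₂ < 0) (hs₂' : -1 < s₂)
    (hp₁ : 0 < p₁) (hp₂ : 0 < p₂) (hsum : p₁ + p₂ = 1)
    (hΛ₁2 : 0 < -p₁ * (s₁ / (1 + s₁)) - p₂ * (s₂ / (1 + s₂)))
    (hΛ₀1 : 0 < p₁ * r₁ + p₂ * r₂) :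
    0 < p₁ * ((r₁ - s₁) / (1 + s₁)) + p₂ * ((r₂ - s₂) / (1 + s₂)) := by
  have ha : 0 < 1 + s₁ := by linarith
  have hb : 0 < 1 + s₂ := by linarith
  have h1 : p₁ * r₁ ≤ p₁ * (r₁ / (1 + s₁)) := by
    have : r₁ ≤ r₁ / (1 + s₁) := by
      rw [le_div_iff₀ ha]; nlinarith
    nlinarith
  have h2 : p₂ * r₂ ≤ p₂ * (r₂ / (1 + s₂)) := by
    have : r₂ ≤ r₂ / (1 + s₂) := by
      rw [le_div_iff₀ hb]; nlinarith
    nlinarith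
  have key : p₁ * ((r₁ - s₁) / (1 + s₁)) + p₂ * ((r₂ - s₂) / (1 + s₂))
      = (p₁ * (r₁ / (1 + s₁)) + p₂ * (r₂ / (1 + s₂)))
        + (-p₁ * (s₁ / (1 + s₁)) - p₂ * (s₂ / (1 + s₂))) := by
    field_simp
    ring
  linarith
end

section
/- For the three-species system with three environments s_i = (s_i, r_i, 0), i = 1,2,3, the determinant det(G_1 - G_2, G_2 - G_3)(x,y) equals [x y (1-x-y)/h(x,y)] · (s_2 r_3 - r_2 s_3 + s_3 r_1 - s_1 r_3 + s_1 r_2 - s_2 r_1), where h(x,y) = (1+s_1 x+r_1 y)(1+s_2 x+r_2 y)(1+s_3 x+r_3 y), and G_i(x,y) = (x(s_i - s_i x - r_i y)/(1+s_i x+r_i y), y(r_i - s_i x - r_i y)/(1+s_i x+r_i y)). -/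
/-- the determinant `det(G₁ - G₂, G₂ - G₃)` for the three-species,
three-environment system. -/
theorem determinant_vector_fields
    (s₁ r₁ s₂ r₂ s₃ r₃ x y : ℝ)
    (hs₁ : -1 < s₁) (hr₁ : -1 < r₁) (hs₂ : -1 < s₂) (hr₂ : -1 < r₂)
    (hs₃ : -1 < s₃) (hr₃ : -1 < r₃)
    (hx : 0 < x) (hy : 0 < y) (hxy : x + y < 1) :
    let G : ℝ → ℝ → ℝ × ℝ := fun s r =>
      (x * (s - s * x - r * y) / (1 + s * x + r * y),
       y * (r - s * x - r * y) / (1 + s * x + r * y))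
    let h : ℝ := (1 + s₁ * x + r₁ * y) * (1 + s₂ * x + r₂ * y) * (1 + s₃ * x + r₃ * y)
    ((G s₁ r₁).1 - (G s₂ r₂).1) * ((G s₂ r₂).2 - (G s₃ r₃).2)
      - ((G s₁ r₁).2 - (G s₂ r₂).2) * ((G s₂ r₂).1 - (G s₃ r₃).1)
      = x * y * (1 - x - y) / h *
        (s₂ * r₃ - r₂ * s₃ + s₃ * r₁ - s₁ * r₃ + s₁ * r₂ - s₂ * r₁) := by
  have key : ∀ s r : ℝ, -1 < s → -1 < r → 0 < 1 + s * x + r * y := by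
    intro s r hs hr
    nlinarith [mul_lt_mul_of_pos_left hs hx, mul_lt_mul_of_pos_left hr hy]
  have h1 := (key s₁ r₁ hs₁ hr₁).ne'
  have h2 := (key s₂ r₂ hs₂ hr₂).ne'
  have h3 := (key s₃ r₃ hs₃ hr₃).ne'
  intro G h
  simp only [G, h]
  rw [div_sub_div _ _ h1 h2, div_sub_div _ _ h2 h3, div_sub_div _ _ h1 h2, div_sub_div _ _ h2 h3,
    div_mul_div_comm, div_mul_div_comm, div_sub_div_same, div_mul_eq_mul_div,
    div_eq_div_iff (by simp [h1, h2, h3]) (by simp [h1, h2, h3])]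
  ring
end
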